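/- Let p, q and r be probability measures on a measurable space with H(p|r) < ∞ and H(q|r) < ∞, and set s = (p+q)/2. Then H(s|r) + (1/2)·H(p|s) + (1/2)·H(q|s) = (1/2)·H(p|r) + (1/2)·H(q|r). -/

import Mathlib

/-!
Write `s = (p + q)/2`. Since `p, q ≤ 2 • s`, the densities `dp/ds` and `dq/ds` are bounded by `2`,
so `H(p|s)` and `H(q|s)` are finite. The chain rule `log dp/dr = log dp/ds + log ds/dr` (`p`-a.e.)
then shows that `log ds/dr` is integrable against `p` and `q`, and splits `H(p|r)` and `H(q|r)`.
Averaging the two splittings gives the identity, because `∫ log ds/dr ds` is the average of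
`∫ log ds/dr dp` and `∫ log ds/dr dq`.
-/

open MeasureTheory
open scoped ENNReal NNReal Classical

/-- Relative entropy `H(p|r) = ∫ log (dp/dr) dp ∈ [0,∞]` when `p ≪ r` (with value `+∞` when the
integrand is not integrable), and `H(p|r) = +∞` otherwise. -/
noncomputable def relEntropy {Y : Type*} [MeasurableSpace Y] (p r : Measure Y) : EReal :=
  if p ≪ r ∧ Integrable (llr p r) p then ((∫ x, llr p r x ∂p : ℝ) : EReal) else ⊤

namespace MeasureTheory

variable {α : Type*} [MeasurableSpace α] {μ ν κ : Measure α}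

lemma Measure.rnDeriv_le_of_le_smul [SigmaFinite ν] {c : ℝ≥0∞} (h : μ ≤ c • ν) :
    μ.rnDeriv ν ≤ᵐ[ν] fun _ ↦ c := by
  refine ae_le_of_forall_setLIntegral_le_of_sigmaFinite (μ.measurable_rnDeriv ν) fun s _ _ ↦ ?_
  rw [setLIntegral_const]
  exact (Measure.setLIntegral_rnDeriv_le s).trans (h s)

/-- `∫ llr μ ν ∂μ = ∫ t log t ∂ν` with `t = dμ/dν ∈ [0, c]`, and `t log t` is bounded there. -/
lemma integrable_llr_of_le_smul [SigmaFinite μ] [IsFiniteMeasure ν] {c : ℝ≥0∞}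
    (h : μ ≤ c • ν) (hc : c ≠ ∞) : Integrable (llr μ ν) μ := by
  have hμν := Measure.absolutelyContinuous_of_le_smul h
  rw [← integrable_rnDeriv_mul_log_iff hμν]
  obtain ⟨C, hC⟩ := isCompact_Icc.exists_bound_of_continuousOn
    (Real.continuous_mul_log.continuousOn (s := Set.Icc 0 c.toReal))
  refine Integrable.mono' (integrable_const C) (by fun_prop) ?_
  filter_upwards [Measure.rnDeriv_le_of_le_smul h] with x hx
  exact hC _ ⟨ENNReal.toReal_nonneg, ENNReal.toReal_mono hc hx⟩

lemma llr_ae_eq_llr_add_llr [SigmaFinite μ] [SigmaFinite ν] [SigmaFinite κ]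
    (hμν : μ ≪ ν) (hνκ : ν ≪ κ) :
    llr μ κ =ᵐ[μ] fun x ↦ llr μ ν x + llr ν κ x := by
  have hμκ : μ ≪ κ := hμν.trans hνκ
  filter_upwards [hμκ.ae_le (Measure.rnDeriv_mul_rnDeriv hμν (κ := κ)),
    Measure.rnDeriv_pos hμν, hμν.ae_le (Measure.rnDeriv_lt_top μ ν),
    hμν.ae_le (Measure.rnDeriv_pos hνκ), hμκ.ae_le (Measure.rnDeriv_lt_top ν κ)]
    with x hx hμν_pos hμν_lt hνκ_pos hνκ_lt
  rw [llr, llr, llr, ← hx, Pi.mul_apply, ENNReal.toReal_mul, Real.log_mul]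
  · exact (ENNReal.toReal_pos hμν_pos.ne' hμν_lt.ne).ne'
  · exact (ENNReal.toReal_pos hνκ_pos.ne' hνκ_lt.ne).ne'

section Chain

variable [SigmaFinite μ] [SigmaFinite ν] [SigmaFinite κ]
  (hμν : μ ≪ ν) (hνκ : ν ≪ κ)
include hμν hνκ

lemma integrable_llr_of_chain
    (hμκ_int : Integrable (llr μ κ) μ) (hμν_int : Integrable (llr μ ν) μ) :
    Integrable (llr ν κ) μ :=
  (hμκ_int.sub hμν_int).congr <| by
    filter_upwards [llr_ae_eq_llr_add_llr hμν hνκ] with x hx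
    rw [Pi.sub_apply, hx, add_sub_cancel_left]

lemma integral_llr_chain
    (hμν_int : Integrable (llr μ ν) μ) (hνκ_int : Integrable (llr ν κ) μ) :
    ∫ x, llr μ κ x ∂μ = ∫ x, llr μ ν x ∂μ + ∫ x, llr ν κ x ∂μ := by
  rw [integral_congr_ae (llr_ae_eq_llr_add_llr hμν hνκ), integral_add hμν_int hνκ_int]

end Chain

end MeasureTheory

section RelEntropy

variable {Y : Type*} [MeasurableSpace Y] {p r : Measure Y}

lemma relEntropy_lt_top_iff :
    relEntropy p r < ⊤ ↔ p ≪ r ∧ Integrable (llr p r) p := by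
  unfold relEntropy
  split_ifs with h <;> simp [h, EReal.coe_lt_top]

lemma relEntropy_of_integrable (hpr : p ≪ r) (h : Integrable (llr p r) p) :
    relEntropy p r = ((∫ x, llr p r x ∂p : ℝ) : EReal) :=
  if_pos ⟨hpr, h⟩

end RelEntropy

theorem relEntropy_average_identity {Y : Type*} [MeasurableSpace Y] (p q r : Measure Y)
    [IsProbabilityMeasure p] [IsProbabilityMeasure q] [IsProbabilityMeasure r]
    (hp : relEntropy p r < ⊤) (hq : relEntropy q r < ⊤) :
    relEntropy ((2 : ℝ≥0∞)⁻¹ • (p + q)) r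
      + (1/2 : EReal) * relEntropy p ((2 : ℝ≥0∞)⁻¹ • (p + q))
      + (1/2 : EReal) * relEntropy q ((2 : ℝ≥0∞)⁻¹ • (p + q))
    = (1/2 : EReal) * relEntropy p r + (1/2 : EReal) * relEntropy q r := by
  set s : Measure Y := (2 : ℝ≥0∞)⁻¹ • (p + q)
  obtain ⟨hpr, hpr_int⟩ := relEntropy_lt_top_iff.1 hp
  obtain ⟨hqr, hqr_int⟩ := relEntropy_lt_top_iff.1 hq
  have : IsFiniteMeasure s := (p + q).smul_finite (by simp)
  have h2s : (2 : ℝ≥0∞) • s = p + q := by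
    rw [smul_smul, ENNReal.mul_inv_cancel two_ne_zero ENNReal.ofNat_ne_top, one_smul]
  have hps : p ≤ (2 : ℝ≥0∞) • s := h2s ▸ Measure.le_add_right le_rfl
  have hqs : q ≤ (2 : ℝ≥0∞) • s := h2s ▸ Measure.le_add_left le_rfl
  have hps_ac := Measure.absolutelyContinuous_of_le_smul hps
  have hqs_ac := Measure.absolutelyContinuous_of_le_smul hqs
  have hsr : s ≪ r := (hpr.add_left hqr).smul_left _
  have hps_int := integrable_llr_of_le_smul hps ENNReal.ofNat_ne_top
  have hqs_int := integrable_llr_of_le_smul hqs ENNReal.ofNat_ne_top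
  have hsr_p := integrable_llr_of_chain hps_ac hsr hpr_int hps_int
  have hsr_q := integrable_llr_of_chain hqs_ac hsr hqr_int hqs_int
  have hsr_int : Integrable (llr s r) s :=
    (integrable_smul_measure (by simp) (by simp)).2 (integrable_add_measure.2 ⟨hsr_p, hsr_q⟩)
  have hIs : ∫ x, llr s r x ∂s = 2⁻¹ * (∫ x, llr s r x ∂p + ∫ x, llr s r x ∂q) := by
    change ∫ x, llr s r x ∂((2 : ℝ≥0∞)⁻¹ • (p + q)) = _
    rw [integral_smul_measure, integral_add_measure hsr_p hsr_q, smul_eq_mul]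
    norm_num
  have hIp := integral_llr_chain hps_ac hsr hps_int hsr_p
  have hIq := integral_llr_chain hqs_ac hsr hqs_int hsr_q
  rw [relEntropy_of_integrable hsr hsr_int, relEntropy_of_integrable hps_ac hps_int,
    relEntropy_of_integrable hqs_ac hqs_int, relEntropy_of_integrable hpr hpr_int,
    relEntropy_of_integrable hqr hqr_int,
    show (1/2 : EReal) = ((1/2 : ℝ) : EReal) by rw [EReal.coe_div]; rfl]
  norm_cast
  linarith
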